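/- The relative elementary orthogonal group EO_{2n}(R, I) is generated as a group by the elements g·oe_{ij}(x)·g^{-1}, where g ∈ EO_{2n}(R), x ∈ I, and either i = 1 or j = 1. -/

import Mathlib

open Matrix

/-- The permutation σ of the index set {1,…,2n}, encoded as `Fin n × Fin 2`,
which swaps 2i−1 and 2i. The index 1 corresponds to ((0 : Fin n), (0 : Fin 2)). -/
def sw {n : ℕ} (p : Fin n × Fin 2) : Fin n × Fin 2 := (p.1, 1 - p.2)

/-- The elementary orthogonal generator oe_{ij}(z) = I + z e_{ij} − z e_{σ(j)σ(i)}. -/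
def oe {n : ℕ} (R : Type*) [CommRing R] (i j : Fin n × Fin 2) (z : R) :
    Matrix (Fin n × Fin 2) (Fin n × Fin 2) R :=
  1 + z • Matrix.single i j (1 : R) - z • Matrix.single (sw j) (sw i) (1 : R)

variable (n : ℕ) (R : Type*) [CommRing R]

/-- The elementary orthogonal group EO_{2n}(R), generated by the elementary
orthogonal matrices oe_{ij}(z), z ∈ R, i ≠ j, i ≠ σ(j). -/
def EO : Subgroup (GL (Fin n × Fin 2) R) :=
  Subgroup.closure {g | ∃ i j : Fin n × Fin 2, ∃ z : R, i ≠ j ∧ i ≠ sw j ∧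
    (g : Matrix (Fin n × Fin 2) (Fin n × Fin 2) R) = oe R i j z}

/-- The group EO_{2n}(I), generated by the oe_{ij}(x) with x ∈ I. -/
def EOI (I : Ideal R) : Subgroup (GL (Fin n × Fin 2) R) :=
  Subgroup.closure {g | ∃ i j : Fin n × Fin 2, ∃ x : R, x ∈ I ∧ i ≠ j ∧ i ≠ sw j ∧
    (g : Matrix (Fin n × Fin 2) (Fin n × Fin 2) R) = oe R i j x}

/-- The relative elementary orthogonal group EO_{2n}(R, I): the normal closure of
EO_{2n}(I) in EO_{2n}(R). -/
def EORel (I : Ideal R) : Subgroup (GL (Fin n × Fin 2) R) :=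
  Subgroup.closure {g | ∃ e ∈ EO n R, ∃ h ∈ EOI n R I, g = e * h * e⁻¹}

/-- The group EO^1_{2n}(R,I), generated by oe_{1i}(a) (a ∈ R) and oe_{j1}(x) (x ∈ I)
for indices i, j ∈ {3,…,2n}, i.e. indices whose first coordinate is nonzero. -/
def EO1 (I : Ideal R) [NeZero n] : Subgroup (GL (Fin n × Fin 2) R) :=
  Subgroup.closure {g | ∃ p : Fin n × Fin 2, p.1 ≠ 0 ∧
    ((∃ a : R, (g : Matrix (Fin n × Fin 2) (Fin n × Fin 2) R) = oe R (0, 0) p a) ∨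
      (∃ x ∈ I, (g : Matrix (Fin n × Fin 2) (Fin n × Fin 2) R) = oe R p (0, 0) x))}

/-! Fix an index `k` (here `k = 1`). Since `[oe_{ik}(1), oe_{kj}(x)] = oe_{ij}(x)`, every
`e · oe_{ij}(x) · e⁻¹` with `i, j ∉ {k, σ(k)}` is a product of two conjugates of `oe_{kj}(±x)`.
The cases `σ(i) = k` or `σ(j) = k` reduce to `j = k` or `i = k` through the symmetry
`oe_{ij}(x) = oe_{σ(j)σ(i)}(-x)`. -/

section Index

variable {n : ℕ}

lemma sw_involutive : Function.Involutive (sw : Fin n × Fin 2 → Fin n × Fin 2) := by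
  rintro ⟨a, b⟩
  simp only [sw, sub_sub_cancel]

@[simp] lemma sw_sw (p : Fin n × Fin 2) : sw (sw p) = p := sw_involutive p

lemma sw_injective : Function.Injective (sw : Fin n × Fin 2 → Fin n × Fin 2) :=
  sw_involutive.injective

lemma sw_ne_self (p : Fin n × Fin 2) : sw p ≠ p := by
  rcases p with ⟨a, b⟩
  fin_cases b <;> simp [sw]

lemma sw_eq_comm {p q : Fin n × Fin 2} : sw p = q ↔ p = sw q := by
  rw [← sw_injective.eq_iff, sw_sw]

end Index

section Transvections

variable {n R}

@[simp] lemma oe_zero (i j : Fin n × Fin 2) : oe R i j 0 = 1 := by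
  simp [oe]

lemma oe_mul_oe {i j : Fin n × Fin 2} (hij : i ≠ j) (x y : R) :
    oe R i j x * oe R i j y = oe R i j (x + y) := by
  have hjj : j ≠ sw j := (sw_ne_self j).symm
  have hii : sw i ≠ i := sw_ne_self i
  have hij' : sw i ≠ sw j := sw_injective.ne hij
  simp only [oe, sub_eq_add_neg, mul_add, add_mul, mul_neg, neg_mul, mul_one, one_mul,
    smul_mul_assoc, mul_smul_comm, single_mul_single_of_ne _ _ _ _ hij.symm,
    single_mul_single_of_ne _ _ _ _ hjj, single_mul_single_of_ne _ _ _ _ hii,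
    single_mul_single_of_ne _ _ _ _ hij', smul_zero, neg_zero, add_zero]
  module

lemma oe_eq_oe_sw (i j : Fin n × Fin 2) (x : R) : oe R i j x = oe R (sw j) (sw i) (-x) := by
  simp only [oe, sw_sw]
  module

/-- The commutator formula `[oe_{ik}(a), oe_{kj}(b)] = oe_{ij}(ab)`. -/
lemma oe_mul_oe_eq_oe_mul {i j k : Fin n × Fin 2} (hij : i ≠ j) (hik : i ≠ k) (hjk : j ≠ k)
    (hik' : i ≠ sw k) (hjk' : j ≠ sw k) (a b : R) :
    oe R i k a * oe R k j b = oe R i j (a * b) * (oe R k j b * oe R i k a) := by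
  have h₁ : k ≠ sw j := fun h => hjk' (sw_eq_comm.mp h.symm)
  have h₂ : sw i ≠ k := fun h => hik' (sw_eq_comm.mp h)
  have h₃ : sw i ≠ sw j := sw_injective.ne hij
  have h₄ : sw i ≠ sw k := sw_injective.ne hik
  have h₅ : j ≠ sw j := (sw_ne_self j).symm
  have h₆ : sw i ≠ i := sw_ne_self i
  simp only [oe, sub_eq_add_neg, mul_add, add_mul, mul_neg, neg_mul, mul_one, one_mul,
    smul_mul_assoc, mul_smul_comm, single_mul_single_same, single_mul_single_of_ne,
    ne_eq, hjk, hjk', h₁, h₂, h₃, h₄, h₅, h₆, hij.symm, hik'.symm, not_false_eq_true,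
    smul_zero, neg_zero, add_zero]
  module

def oeUnit {i j : Fin n × Fin 2} (hij : i ≠ j) (x : R) : GL (Fin n × Fin 2) R :=
  ⟨oe R i j x, oe R i j (-x), by rw [oe_mul_oe hij, add_neg_cancel, oe_zero],
    by rw [oe_mul_oe hij, neg_add_cancel, oe_zero]⟩

@[simp] lemma coe_oeUnit {i j : Fin n × Fin 2} (hij : i ≠ j) (x : R) :
    (oeUnit hij x : Matrix (Fin n × Fin 2) (Fin n × Fin 2) R) = oe R i j x := rfl

lemma oeUnit_mem_EO {i j : Fin n × Fin 2} (hij : i ≠ j) (hij' : i ≠ sw j) (x : R) :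
    oeUnit hij x ∈ EO n R :=
  Subgroup.subset_closure ⟨i, j, x, hij, hij', rfl⟩

end Transvections

lemma Subgroup.conj_mem_of_closure {G : Type*} [Group G] {T : Set G} {H : Subgroup G} {e : G}
    (hT : ∀ t ∈ T, e * t * e⁻¹ ∈ H) {g : G} (hg : g ∈ Subgroup.closure T) :
    e * g * e⁻¹ ∈ H :=
  (Subgroup.closure_le (H.comap (MulAut.conj e).toMonoidHom)).mpr hT hg

section Conjugates

variable {n R}

lemma conj_oe_mem_of_forall_index_eq (I : Ideal R) (H : Subgroup (GL (Fin n × Fin 2) R))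
    (k : Fin n × Fin 2)
    (hH : ∀ e ∈ EO n R, ∀ i j : Fin n × Fin 2, ∀ x ∈ I, (i = k ∨ j = k) → i ≠ j → i ≠ sw j →
      ∀ u : GL (Fin n × Fin 2) R, (u : Matrix _ _ R) = oe R i j x → e * u * e⁻¹ ∈ H)
    {e : GL (Fin n × Fin 2) R} (he : e ∈ EO n R) {i j : Fin n × Fin 2} {x : R} (hx : x ∈ I)
    (hij : i ≠ j) (hij' : i ≠ sw j) {u : GL (Fin n × Fin 2) R}
    (hu : (u : Matrix _ _ R) = oe R i j x) : e * u * e⁻¹ ∈ H := by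
  by_cases hk : i = k ∨ j = k
  · exact hH e he i j x hx hk hij hij' u hu
  have hu_sw : (u : Matrix _ _ R) = oe R (sw j) (sw i) (-x) := hu.trans (oe_eq_oe_sw i j x)
  have hsw : sw j ≠ sw i := sw_injective.ne hij.symm
  have hsw' : sw j ≠ sw (sw i) := by rw [sw_sw]; exact fun h => hij' h.symm
  by_cases hk' : sw j = k ∨ sw i = k
  · exact hH e he _ _ (-x) (I.neg_mem hx) hk' hsw hsw' u hu_sw
  push Not at hk hk'
  have hik : i ≠ sw k := fun h => hk'.2 (sw_eq_comm.mpr h)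
  have hjk : j ≠ sw k := fun h => hk'.1 (sw_eq_comm.mpr h)
  have hkj : k ≠ j := hk.2.symm
  have hkj' : k ≠ sw j := fun h => hk'.1 h.symm
  set a := oeUnit hk.1 (1 : R)
  set b := oeUnit hkj x
  have hu_comm : u = a * b * a⁻¹ * b⁻¹ := by
    have hab : a * b = u * (b * a) := Units.ext <| by
      simpa [a, b, hu] using oe_mul_oe_eq_oe_mul hij hk.1 hk.2 hik hjk (1 : R) x
    rw [← mul_inv_eq_iff_eq_mul.mpr hab]
    group
  have hsplit : e * u * e⁻¹ = (e * a) * b * (e * a)⁻¹ * (e * b⁻¹ * e⁻¹) := by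
    rw [hu_comm]
    group
  rw [hsplit]
  exact mul_mem
    (hH _ (mul_mem he (oeUnit_mem_EO hk.1 hik 1)) k j x hx (Or.inl rfl) hkj hkj' b rfl)
    (hH e he k j (-x) (I.neg_mem hx) (Or.inl rfl) hkj hkj' b⁻¹ rfl)

end Conjugates

theorem EORel_eq_closure_conjugates_first_index (I : Ideal R) [NeZero n] :
    EORel n R I =
      Subgroup.closure {g | ∃ e ∈ EO n R, ∃ i j : Fin n × Fin 2, ∃ x ∈ I,
        (i = (0, 0) ∨ j = (0, 0)) ∧ i ≠ j ∧ i ≠ sw j ∧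
        ∃ u : GL (Fin n × Fin 2) R,
          (u : Matrix (Fin n × Fin 2) (Fin n × Fin 2) R) = oe R i j x ∧
          g = e * u * e⁻¹} := by
  refine le_antisymm ((Subgroup.closure_le _).mpr ?_) ((Subgroup.closure_le _).mpr ?_)
  · rintro _ ⟨e, he, h, hh, rfl⟩
    refine Subgroup.conj_mem_of_closure ?_ hh
    rintro u ⟨i, j, x, hx, hij, hij', hu⟩
    refine conj_oe_mem_of_forall_index_eq I _ (0, 0) ?_ he hx hij hij' hu
    intro e he i j x hx hk hij hij' u hu
    exact Subgroup.subset_closure ⟨e, he, i, j, x, hx, hk, hij, hij', u, hu, rfl⟩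
  · rintro _ ⟨e, he, i, j, x, hx, -, hij, hij', u, hu, rfl⟩
    exact Subgroup.subset_closure
      ⟨e, he, u, Subgroup.subset_closure ⟨i, j, x, hx, hij, hij', hu⟩, rfl⟩
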